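/- For the sequence N_m (minimal cardinality of a square-free left cycle set of multipermutational level m), the inequality N_m ≤ 2^{m-2} - 6·2^{m-6} + 1 holds for every m > 5. -/

import Mathlib

/-- A left cycle set: each left multiplication `op x` is bijective and the
cycloid identity `(x·y)·(x·z) = (y·x)·(y·z)` holds. -/
def IsCycleSet {X : Type*} (op : X → X → X) : Prop :=
  (∀ x, Function.Bijective (op x)) ∧
  ∀ x y z, op (op x y) (op x z) = op (op y x) (op y z)

/-- Square-free: `x·x = x` for all `x`. -/
def IsSquareFree {X : Type*} (op : X → X → X) : Prop := ∀ x, op x x = x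

/-- Non-degenerate: the squaring map `x ↦ x·x` is bijective. -/
def IsNonDeg {X : Type*} (op : X → X → X) : Prop :=
  Function.Bijective (fun x => op x x)

/-- An automorphism of a left cycle set. -/
def IsAut {X : Type*} (op : X → X → X) (α : X → X) : Prop :=
  Function.Bijective α ∧ ∀ x y, α (op x y) = op (α x) (α y)

/-- Irretractable: the map `x ↦ σ_x` is injective. -/
def IsIrretractable {X : Type*} (op : X → X → X) : Prop := Function.Injective op

/-- `retRel op n x y` says `σ_{[n]}(x) = σ_{[n]}(y)`, i.e. `x` and `y` have the same
image in the `n`-th retraction `σⁿ(X)`. -/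
def retRel {X : Type*} (op : X → X → X) : ℕ → X → X → Prop
  | 0 => Eq
  | n + 1 => fun x y => ∀ z, retRel op n (op x z) (op y z)

/-- `X` has multipermutational level `m`: `m` is minimal with `|σᵐ(X)| = 1`. -/
def HasMPL {X : Type*} (op : X → X → X) (m : ℕ) : Prop :=
  (∀ x y, retRel op m x y) ∧ ∀ k < m, ¬ (∀ x y, retRel op k x y)

/-- The solution `r(x,y) = (λ_x(y), λ_x(y)·x)` associated to a cycle set,
where `lam x` is the inverse of `op x`. -/
def rmap {X : Type*} (op lam : X → X → X) : X × X → X × X :=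
  fun p => (lam p.1 p.2, op (lam p.1 p.2) p.1)

/-- `r × id`. -/
def r1map {X : Type*} (r : X × X → X × X) : X × X × X → X × X × X :=
  fun p => ((r (p.1, p.2.1)).1, ((r (p.1, p.2.1)).2, p.2.2))

/-- `id × r`. -/
def r2map {X : Type*} (r : X × X → X × X) : X × X × X → X × X × X :=
  fun p => (p.1, r p.2)

/-- One-sided extension of a cycle set by an automorphism `α`, with `none` as the
new element `z`: `x∘y = x·y`, `x∘z = z`, `z∘y = α(y)`. -/
def extOp {X : Type*} (op : X → X → X) (α : X → X) :
    Option X → Option X → Option X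
  | some x, some y => some (op x y)
  | _, none => none
  | none, some y => some (α y)

/-- The dynamical extension `X × ℤ/2ℤ` with `(x,s)·(y,t) = (x·y, t + 1 - δ_{x,y})`. -/
def doubleOp {X : Type*} [DecidableEq X] (op : X → X → X) :
    X × ZMod 2 → X × ZMod 2 → X × ZMod 2 :=
  fun p q => (op p.1 q.1, if p.1 = q.1 then q.2 else q.2 + 1)

/-- The Bachiller–Cedó–Jespers–Okniński operation on `A × B × I`. -/
def bcjoOp {A B I : Type*} [AddCommGroup A] [AddCommGroup B] [DecidableEq I]
    (φ₁ : A → B) (φ₂ : B →+ A) : A × B × I → A × B × I → A × B × I :=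
  fun p q =>
    if p.2.2 = q.2.2 then (q.1, q.2.1 - φ₁ (p.1 - q.1), q.2.2)
    else (q.1 - φ₂ p.2.1, q.2.1, q.2.2)

/-- One-sided extension of `X` by a cycle set `Y` acting by automorphisms:
`x∘y = x·y` inside `X` and `Y`, `x∘y = y` for `x ∈ X, y ∈ Y`, `y∘x = α(y)(x)`. -/
def sumOp {X Y : Type*} (opX : X → X → X) (opY : Y → Y → Y) (α : Y → X → X) :
    X ⊕ Y → X ⊕ Y → X ⊕ Y
  | .inl p, .inl q => .inl (opX p q)
  | .inl _, .inr y => .inr y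
  | .inr y, .inl q => .inl (α y q)
  | .inr y, .inr y' => .inr (opY y y')

/-- The set of cardinalities of finite square-free non-degenerate cycle sets of
multipermutational level `m`; `N_m` is its infimum. -/
def Nset (m : ℕ) : Set ℕ :=
  {n | ∃ (X : Type) (op : X → X → X), Finite X ∧ IsCycleSet op ∧ IsSquareFree op ∧
        IsNonDeg op ∧ HasMPL op m ∧ Nat.card X = n}

/-- The set of cardinalities of finite square-free cycle sets of level `k` admitting
an automorphism `α` with `σ_{[k-1]}(x) ≠ σ_{[k-1]}(α(x))` for some `x`;
`N̄_k` is its infimum. -/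
def NbarSet (k : ℕ) : Set ℕ :=
  {n | ∃ (X : Type) (op : X → X → X), Finite X ∧ IsCycleSet op ∧ IsSquareFree op ∧
        HasMPL op k ∧ (∃ (α : X → X) (x : X), IsAut op α ∧ ¬ retRel op (k - 1) x (α x)) ∧
        Nat.card X = n}

/-!
A 10-element square-free cycle set `X` of level 5 has an automorphism `α` and a point `x` with
`σ_{[4]}(x) ≠ σ_{[4]}(α x)`, so `N̄₅ ≤ 10`. Doubling `X ↦ X × ℤ/2` (with `α × id`) raises the
level by one and keeps such an automorphism, because `σ_{[k+1]}` of the double is `σ_{[k]}` of the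
first coordinate; so `N̄_{k+j} ≤ 2^j N̄_k`. Adjoining to such an `X` of level `k` a point `z` with
`z·y = α y` and `y·z = z` gives a square-free cycle set of level `k + 1`: `σ_{[k]}(z) = σ_{[k]}(x)`
would mean `σ_{[k-1]}(α u) = σ_{[k-1]}(x·u)` for all `u`, which fails at `u = x` as `x·x = x`.
Hence `N_m ≤ 10 · 2^(m-6) + 1 = 2^(m-2) - 6 · 2^(m-6) + 1`.
-/

section RetRel

variable {X : Type*} (op : X → X → X)

theorem retRel_refl : ∀ n (x : X), retRel op n x x
  | 0, _ => rfl
  | n + 1, _ => fun _ => retRel_refl n _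

theorem retRel_symm : ∀ n {x y : X}, retRel op n x y → retRel op n y x
  | 0, _, _, h => h.symm
  | n + 1, _, _, h => fun z => retRel_symm n (h z)

variable {op}

theorem forall_retRel_mono {n k : ℕ} (hnk : n ≤ k) (h : ∀ x y : X, retRel op n x y) :
    ∀ x y : X, retRel op k x y := by
  induction hnk with
  | refl => exact h
  | step _ ih => exact fun x y z => ih _ _

theorem retRel_succ_of_retRel_map {Y : Type*} {opY : Y → Y → Y} {π : X → Y}
    (hπ : ∀ x z, π (op x z) = opY (π x) (π z))
    (hfib : ∀ x y, π x = π y → retRel op 1 x y) :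
    ∀ n x y, retRel opY n (π x) (π y) → retRel op (n + 1) x y
  | 0, x, y, h => hfib x y h
  | n + 1, x, y, h => fun z =>
      retRel_succ_of_retRel_map hπ hfib n _ _ (by rw [hπ, hπ]; exact h (π z))

theorem IsSquareFree.isNonDeg (hsf : IsSquareFree op) : IsNonDeg op :=
  show Function.Bijective (fun x => op x x) from
    (funext hsf : (fun x => op x x) = id) ▸ Function.bijective_id

end RetRel

section Double

variable {X : Type*} [DecidableEq X] {op : X → X → X}

theorem retRel_doubleOp_succ_iff :
    ∀ n (p q : X × ZMod 2), retRel (doubleOp op) (n + 1) p q ↔ retRel op n p.1 q.1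
  | 0, p, q => by
    refine ⟨fun h => ?_, fun h z => by simp only [retRel, doubleOp, show p.1 = q.1 from h]⟩
    have h₂ := congrArg Prod.snd (h (p.1, 0))
    by_contra hpq
    simp [doubleOp, Ne.symm hpq] at h₂
  | n + 1, p, q => by
    refine ⟨fun h y => ?_, fun h z => ?_⟩
    · simpa [doubleOp] using (retRel_doubleOp_succ_iff n _ _).mp (h (y, 0))
    · simpa [doubleOp] using (retRel_doubleOp_succ_iff n _ _).mpr (h z.1)

theorem IsCycleSet.doubleOp (hcs : IsCycleSet op) : IsCycleSet (doubleOp op) := by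
  have hinj (x y z : X) : op x y = op x z ↔ y = z := (hcs.1 x).1.eq_iff
  refine ⟨fun p => ⟨fun a b hab => ?_, fun b => ?_⟩, fun p q r => ?_⟩
  · have h₁ : a.1 = b.1 := (hcs.1 p.1).1 (congrArg Prod.fst hab)
    have h₂ := congrArg Prod.snd hab
    simp only [_root_.doubleOp, h₁] at h₂
    split_ifs at h₂ <;> exact Prod.ext h₁ (by simpa using h₂)
  · obtain ⟨y, hy⟩ := (hcs.1 p.1).2 b.1
    refine ⟨(y, if p.1 = y then b.2 else b.2 + 1), Prod.ext hy ?_⟩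
    have h2 : b.2 + 1 + 1 = b.2 := by
      rw [add_assoc, show (1 + 1 : ZMod 2) = 0 from rfl, add_zero]
    split_ifs <;> simp [_root_.doubleOp, *]
  · refine Prod.ext (hcs.2 p.1 q.1 r.1) ?_
    simp only [_root_.doubleOp, hinj]
    split_ifs <;> simp_all

theorem IsSquareFree.doubleOp (hsf : IsSquareFree op) :
    IsSquareFree (doubleOp op) := fun p => by simp [_root_.doubleOp, hsf p.1]

theorem HasMPL.doubleOp [Nonempty X] {k : ℕ} (hm : HasMPL op k) :
    HasMPL (doubleOp op) (k + 1) := by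
  refine ⟨fun p q => (retRel_doubleOp_succ_iff k p q).mpr (hm.1 p.1 q.1), ?_⟩
  rintro (_ | j) hj hall
  · obtain ⟨x⟩ := ‹Nonempty X›
    exact absurd (congrArg Prod.snd (hall (x, 0) (x, 1))) zero_ne_one
  · exact hm.2 j (by omega) fun x y => (retRel_doubleOp_succ_iff j (x, 0) (y, 0)).mp (hall _ _)

theorem IsAut.doubleOp_prodMap {α : X → X} (ha : IsAut op α) :
    IsAut (doubleOp op) (Prod.map α id) := by
  refine ⟨ha.1.prodMap Function.bijective_id, fun p q => ?_⟩
  simp [_root_.doubleOp, ha.2, ha.1.1.eq_iff]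

end Double

section Extension

variable {X : Type*} {op : X → X → X} {α : X → X}

theorem extOp_eq_optionMap (p : Option X) : extOp op α p = Option.map (p.elim α op) := by
  funext q
  cases p <;> cases q <;> rfl

theorem IsCycleSet.extOp (hcs : IsCycleSet op) (ha : IsAut op α) : IsCycleSet (extOp op α) := by
  refine ⟨fun p => ?_, ?_⟩
  · have hp : Function.Bijective (p.elim α op) := by
      cases p
      exacts [ha.1, hcs.1 _]
    rw [extOp_eq_optionMap]
    exact (Equiv.ofBijective _ hp).optionCongr.bijective
  · rintro (_ | x) (_ | y) (_ | z) <;> simp [_root_.extOp, ha.2, hcs.2]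

theorem IsSquareFree.extOp (hsf : IsSquareFree op) : IsSquareFree (extOp op α)
  | none => rfl
  | some x => congrArg some (hsf x)

theorem retRel_extOp_some_iff :
    ∀ n (x y : X), retRel (extOp op α) n (some x) (some y) ↔ retRel op n x y
  | 0, _, _ => Option.some_inj
  | n + 1, _, _ => by
    refine ⟨fun h z => (retRel_extOp_some_iff n _ _).mp (h (some z)), fun h => ?_⟩
    rintro (_ | z)
    · exact retRel_refl _ n none
    · exact (retRel_extOp_some_iff n _ _).mpr (h z)

theorem retRel_extOp_none_some_iff (n : ℕ) (x : X) :
    retRel (extOp op α) (n + 1) none (some x) ↔ ∀ u, retRel op n (α u) (op x u) := by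
  refine ⟨fun h u => (retRel_extOp_some_iff _ _ _).mp (h (some u)), fun h => ?_⟩
  rintro (_ | u)
  · exact retRel_refl _ n none
  · exact (retRel_extOp_some_iff _ _ _).mpr (h u)

theorem HasMPL.extOp {k : ℕ} (hm : HasMPL op (k + 1)) (hsf : IsSquareFree op) {x₀ : X}
    (hx₀ : ¬ retRel op k x₀ (α x₀)) : HasMPL (_root_.extOp op α) (k + 2) := by
  have hnone (x : X) : retRel (_root_.extOp op α) (k + 2) none (some x) :=
    (retRel_extOp_none_some_iff _ x).mpr fun u => hm.1 _ _
  refine ⟨?_, fun j hj hall => hx₀ ?_⟩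
  · rintro (_ | x) (_ | y)
    · exact retRel_refl _ _ none
    · exact hnone y
    · exact retRel_symm _ _ (hnone x)
    · exact (retRel_extOp_some_iff _ _ _).mpr (forall_retRel_mono (k + 1).le_succ hm.1 x y)
  · have h := (retRel_extOp_none_some_iff k x₀).mp
      (forall_retRel_mono (Nat.le_of_lt_succ hj) hall none (some x₀)) x₀
    rw [hsf x₀] at h
    exact retRel_symm _ _ h

end Extension

theorem ne_zero_of_mem_NbarSet {n k : ℕ} (h : n ∈ NbarSet k) : k ≠ 0 := by
  rintro rfl
  obtain ⟨X, op, -, -, -, hm, ⟨α, x, -, hx⟩, -⟩ := h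
  exact hx (hm.1 _ _)

theorem two_mul_mem_NbarSet {n k : ℕ} (h : n ∈ NbarSet k) : 2 * n ∈ NbarSet (k + 1) := by
  obtain ⟨j, rfl⟩ := Nat.exists_eq_add_one_of_ne_zero (ne_zero_of_mem_NbarSet h)
  obtain ⟨X, op, hfin, hcs, hsf, hm, ⟨α, x, ha, hx⟩, rfl⟩ := h
  classical
  have : Nonempty X := ⟨x⟩
  refine ⟨X × ZMod 2, doubleOp op, inferInstance, hcs.doubleOp, hsf.doubleOp, hm.doubleOp,
    ⟨Prod.map α id, (x, 0), ha.doubleOp_prodMap, ?_⟩, ?_⟩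
  · simpa using (retRel_doubleOp_succ_iff j (x, 0) _).not.mpr hx
  · simp [Nat.card_prod, mul_comm]

theorem mul_two_pow_mem_NbarSet {n k : ℕ} (h : n ∈ NbarSet k) :
    ∀ j, n * 2 ^ j ∈ NbarSet (k + j)
  | 0 => by simpa using h
  | j + 1 => by
    rw [← add_assoc]
    simpa [pow_succ, mul_comm, mul_left_comm] using
      two_mul_mem_NbarSet (mul_two_pow_mem_NbarSet h j)

theorem add_one_mem_Nset {n k : ℕ} (h : n ∈ NbarSet k) : n + 1 ∈ Nset (k + 1) := by
  obtain ⟨j, rfl⟩ := Nat.exists_eq_add_one_of_ne_zero (ne_zero_of_mem_NbarSet h)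
  obtain ⟨X, op, hfin, hcs, hsf, hm, ⟨α, x, ha, hx⟩, rfl⟩ := h
  exact ⟨Option X, extOp op α, inferInstance, hcs.extOp ha, hsf.extOp, hsf.extOp.isNonDeg,
    hm.extOp hsf hx, Finite.card_option⟩

theorem sInf_Nset_le {n k m : ℕ} (h : n ∈ NbarSet k) (hkm : k < m) :
    sInf (Nset m) ≤ n * 2 ^ (m - k - 1) + 1 := by
  obtain ⟨j, rfl⟩ := Nat.exists_eq_add_of_lt hkm
  rw [show k + j + 1 - k - 1 = j by omega]
  exact Nat.sInf_le (by simpa using add_one_mem_Nset (mul_two_pow_mem_NbarSet h j))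

section TenElementExample

instance decidableRetRel {X : Type*} [DecidableEq X] [Fintype X] (op : X → X → X) :
    ∀ n (x y : X), Decidable (retRel op n x y)
  | 0, x, y => decEq x y
  | n + 1, x, y =>
    have := fun z => decidableRetRel op n (op x z) (op y z)
    Fintype.decidableForallFintype

/- `nineOp` and `sevenOp` are the retractions `σ(X)`, `σ²(X)` of `X = tenOp`, with retraction
maps `tenToNine` and `nineToSeven`; going through them avoids deciding `retRel tenOp 5` directly,
which quantifies over 10⁵ arguments per pair. -/
def tenOp : Fin 10 → Fin 10 → Fin 10 :=
  ![![0, 1, 2, 3, 4, 5, 6, 7, 8, 9],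
    ![0, 1, 2, 3, 4, 5, 6, 7, 8, 9],
    ![0, 1, 2, 3, 5, 4, 6, 7, 8, 9],
    ![1, 0, 2, 3, 5, 4, 6, 7, 8, 9],
    ![0, 1, 3, 2, 4, 5, 6, 7, 8, 9],
    ![1, 0, 3, 2, 4, 5, 6, 7, 8, 9],
    ![0, 1, 2, 3, 4, 5, 6, 7, 9, 8],
    ![0, 1, 4, 5, 2, 3, 6, 7, 9, 8],
    ![0, 1, 2, 3, 4, 5, 7, 6, 8, 9],
    ![0, 1, 4, 5, 2, 3, 7, 6, 8, 9]]

def tenAut : Fin 10 → Fin 10 := ![0, 1, 2, 3, 4, 5, 8, 9, 6, 7]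

def nineOp : Fin 9 → Fin 9 → Fin 9 :=
  ![![0, 1, 2, 3, 4, 5, 6, 7, 8],
    ![0, 1, 2, 4, 3, 5, 6, 7, 8],
    ![0, 1, 2, 4, 3, 5, 6, 7, 8],
    ![0, 2, 1, 3, 4, 5, 6, 7, 8],
    ![0, 2, 1, 3, 4, 5, 6, 7, 8],
    ![0, 1, 2, 3, 4, 5, 6, 8, 7],
    ![0, 3, 4, 1, 2, 5, 6, 8, 7],
    ![0, 1, 2, 3, 4, 6, 5, 7, 8],
    ![0, 3, 4, 1, 2, 6, 5, 7, 8]]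

def sevenOp : Fin 7 → Fin 7 → Fin 7 :=
  ![![0, 1, 2, 3, 4, 5, 6],
    ![0, 1, 2, 3, 4, 5, 6],
    ![0, 1, 2, 3, 4, 5, 6],
    ![0, 1, 2, 3, 4, 6, 5],
    ![0, 2, 1, 3, 4, 6, 5],
    ![0, 1, 2, 4, 3, 5, 6],
    ![0, 2, 1, 4, 3, 5, 6]]

def tenToNine : Fin 10 → Fin 9 := ![0, 0, 1, 2, 3, 4, 5, 6, 7, 8]

def nineToSeven : Fin 9 → Fin 7 := ![0, 1, 1, 2, 2, 3, 4, 5, 6]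

theorem tenOp_isCycleSet : IsCycleSet tenOp := ⟨by decide +kernel, by decide +kernel⟩

theorem tenOp_isSquareFree : IsSquareFree tenOp := by
  unfold IsSquareFree
  decide

theorem tenAut_isAut : IsAut tenOp tenAut := ⟨by decide +kernel, by decide +kernel⟩

theorem forall_retRel_sevenOp : ∀ a b : Fin 7, retRel sevenOp 3 a b := by decide +kernel

theorem forall_retRel_nineOp : ∀ a b : Fin 9, retRel nineOp 4 a b := fun a b =>
  retRel_succ_of_retRel_map (π := nineToSeven) (by decide +kernel) (by decide +kernel) 3 a b
    (forall_retRel_sevenOp _ _)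

theorem tenOp_hasMPL : HasMPL tenOp 5 := by
  refine ⟨fun a b => ?_, fun k hk hall => ?_⟩
  · exact retRel_succ_of_retRel_map (π := tenToNine) (by decide +kernel) (by decide +kernel) 4 a b
      (forall_retRel_nineOp _ _)
  · have h06 : ¬ retRel tenOp 4 0 6 := by decide +kernel
    exact h06 (forall_retRel_mono (Nat.le_of_lt_succ hk) hall 0 6)

theorem ten_mem_NbarSet : 10 ∈ NbarSet 5 :=
  ⟨Fin 10, tenOp, inferInstance, tenOp_isCycleSet, tenOp_isSquareFree, tenOp_hasMPL,
    ⟨tenAut, 6, tenAut_isAut, by decide +kernel⟩, Nat.card_fin 10⟩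

end TenElementExample

/-- `N_m ≤ 2^{m-2} - 6·2^{m-6} + 1` for every `m > 5`. -/
theorem stmt18 (m : ℕ) (hm : 5 < m) :
    sInf (Nset m) ≤ 2 ^ (m - 2) - 6 * 2 ^ (m - 6) + 1 := by
  obtain ⟨j, rfl⟩ := Nat.exists_eq_add_of_lt hm
  calc sInf (Nset (5 + j + 1)) ≤ 10 * 2 ^ (5 + j + 1 - 5 - 1) + 1 :=
        sInf_Nset_le ten_mem_NbarSet hm
    _ = 2 ^ (5 + j + 1 - 2) - 6 * 2 ^ (5 + j + 1 - 6) + 1 := by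
      rw [show 5 + j + 1 - 5 - 1 = j by omega, show 5 + j + 1 - 2 = j + 4 by omega,
        show 5 + j + 1 - 6 = j by omega, pow_add]
      omega
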